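/- The Iwahori–Hecke algebra ℋ_r over a commutative domain R with invertible parameter q is a free R-module with basis {T_w : w ∈ 𝔖_r}, where T_w = T_{i_1}⋯T_{i_s} for any reduced expression w = s_{i_1}⋯s_{i_s}. -/

import Mathlib

open Finset

def permLength {r : ℕ} (w : Equiv.Perm (Fin r)) : ℕ :=
  (Finset.univ.filter (fun p : Fin r × Fin r => p.1 < p.2 ∧ w p.2 < w p.1)).card

/-- defining relations of the Iwahori–Hecke algebra of `𝔖_r` (generators `T_1,…,T_{r-1}`). -/
inductive HeckeRel (R : Type) [CommRing R] (q : R) (m : ℕ) :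
    FreeAlgebra R (Fin m) → FreeAlgebra R (Fin m) → Prop
  | quad (i : Fin m) :
      HeckeRel R q m ((FreeAlgebra.ι R i - algebraMap R _ q) * (FreeAlgebra.ι R i + 1)) 0
  | comm (i j : Fin m) (h : (i : ℕ) + 1 < (j : ℕ)) :
      HeckeRel R q m (FreeAlgebra.ι R i * FreeAlgebra.ι R j)
        (FreeAlgebra.ι R j * FreeAlgebra.ι R i)
  | braid (i j : Fin m) (h : (j : ℕ) = (i : ℕ) + 1) :
      HeckeRel R q m (FreeAlgebra.ι R i * FreeAlgebra.ι R j * FreeAlgebra.ι R i)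
        (FreeAlgebra.ι R j * FreeAlgebra.ι R i * FreeAlgebra.ι R j)

/-- the Iwahori–Hecke algebra `ℋ_r` of `𝔖_r` over `R` with parameter `q`. -/
abbrev Hecke (R : Type) [CommRing R] (q : R) (r : ℕ) : Type := RingQuot (HeckeRel R q (r-1))

/-- the generator `T_i` of the Hecke algebra -/
def Tgen (R : Type) [CommRing R] (q : R) (r : ℕ) (i : Fin (r-1)) : Hecke R q r :=
  RingQuot.mkAlgHom R (HeckeRel R q (r-1)) (FreeAlgebra.ι R i)

/-- the simple reflection `s_i = (i, i+1)` in `𝔖_r` -/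
def simpleRefl (r : ℕ) (i : Fin (r-1)) : Equiv.Perm (Fin r) :=
  Equiv.swap ⟨(i : ℕ), by have := i.isLt; omega⟩ ⟨(i : ℕ) + 1, by have := i.isLt; omega⟩

/-- `T` is the family `{T_w}` : `T_w = T_{i_1} ⋯ T_{i_s}` for any reduced expression
`w = s_{i_1} ⋯ s_{i_s}` (a word is reduced iff its length equals the inversion number). -/
def IsTFamily (R : Type) [CommRing R] (q : R) (r : ℕ)
    (T : Equiv.Perm (Fin r) → Hecke R q r) : Prop :=
  ∀ (w : Equiv.Perm (Fin r)) (l : List (Fin (r-1))),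
    w = (l.map (simpleRefl r)).prod → l.length = permLength w →
    T w = (l.map (Tgen R q r)).prod

/-!
Write `E_x` for the basis vectors of the free module `𝔖_r →₀ R`. The operators `E_x ↦ T_s E_x`
and `E_x ↦ E_x T_s`, given by the multiplication rules that the basis `{T_w}` must obey
(`heckeOp`), commute with each other. Every `E_w` is reached from `E_1` by right operators along
a reduced word, so an endomorphism commuting with all right operators is determined by its value
at `E_1`; hence the products of left operators along two reduced words of the same permutation
agree. This gives the defining relations, hence a representation `ρ` of `ℋ_r` with
`ρ(T_w) E_1 = E_w`, so the `T_w` are linearly independent. They span `ℋ_r`, as their span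
contains `1` and is stable under left multiplication by the generators. That `T_w` does not
depend on the reduced word is Matsumoto's theorem, proved by the exchange argument on two
distinct left descents.
-/

namespace IwahoriHecke

open Equiv

section HeckeOperator

variable {R X : Type*} [CommRing R] (q : R)

open Classical in
/-- Left multiplication by a generator `T_s` written in a basis `{T_x}`, for `f x = s x` and `P x`
meaning `ℓ(s x) < ℓ(x)`: then `T_s T_x = T_{s x}` if `¬P x`, and otherwise
`T_s T_x = T_s² T_{s x} = q T_{s x} + (q - 1) T_x`. -/
noncomputable def heckeOp (f : X → X) (P : X → Prop) : Module.End R (X →₀ R) :=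
  Finsupp.linearCombination R fun x =>
    if P x then q • Finsupp.single (f x) 1 + (q - 1) • Finsupp.single x 1
    else Finsupp.single (f x) 1

variable {q}

open Classical in
lemma heckeOp_single (f : X → X) (P : X → Prop) (x : X) :
    heckeOp q f P (Finsupp.single x 1) = if P x then
      q • Finsupp.single (f x) 1 + (q - 1) • Finsupp.single x 1
    else Finsupp.single (f x) 1 := by
  simp [heckeOp]

variable {f g : X → X} {P Q : X → Prop}

lemma heckeOp_single_of_neg {x : X} (h : ¬P x) :
    heckeOp q f P (Finsupp.single x 1) = Finsupp.single (f x) 1 := by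
  simp [heckeOp, h]

lemma heckeOp_quadratic (hf : Function.Involutive f) (hP : ∀ x, P (f x) ↔ ¬P x) :
    (heckeOp q f P - algebraMap R _ q) * (heckeOp q f P + 1) = 0 := by
  refine Finsupp.basisSingleOne.ext fun x => ?_
  simp only [Finsupp.coe_basisSingleOne, Module.End.mul_apply, LinearMap.sub_apply,
    LinearMap.add_apply, Module.End.one_apply, LinearMap.zero_apply, Module.algebraMap_end_apply,
    map_add]
  by_cases hx : P x <;>
    simp only [heckeOp_single, map_add, map_smul, hf x, hP, hx, if_true, if_false, not_true,
      not_false_eq_true]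
  all_goals module

lemma heckeOp_commute (hf : Function.Involutive f) (hg : Function.Involutive g)
    (hfg : ∀ x, f (g x) = g (f x)) (hP : ∀ x, P (f x) ↔ ¬P x) (hQ : ∀ x, Q (g x) ↔ ¬Q x)
    (hPg : ∀ x, f x ≠ g x → (P (g x) ↔ P x))
    (hQf : ∀ x, f x ≠ g x → (Q (f x) ↔ Q x)) (hPQ : ∀ x, f x = g x → (P x ↔ Q x)) :
    Commute (heckeOp q f P) (heckeOp q g Q) := by
  refine Finsupp.basisSingleOne.ext fun x => ?_
  simp only [Finsupp.coe_basisSingleOne, Module.End.mul_apply]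
  by_cases hc : f x = g x
  · have hfgx : f (g x) = x := hc ▸ hf x
    have hPgx : P (g x) ↔ ¬P x := hc ▸ hP x
    by_cases hQx : Q x <;>
      simp only [heckeOp_single, map_add, map_smul, hc, hfgx, hg x, hPgx, hQ, hPQ x hc, hQx,
        if_true, if_false, not_true, not_false_eq_true]
  · by_cases hPx : P x <;> by_cases hQx : Q x <;>
      simp only [heckeOp_single, map_add, map_smul, hPg x hc, hQf x hc, hfg, hPx, hQx,
        if_true, if_false]
    all_goals module

end HeckeOperator

lemma span_eq_top_of_mul_mem {S A : Type*} [CommSemiring S] [Semiring A] [Algebra S A]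
    {s t : Set A} (hs : Algebra.adjoin S s = ⊤) (h1 : (1 : A) ∈ Submodule.span S t)
    (hmul : ∀ a ∈ s, ∀ v ∈ t, a * v ∈ Submodule.span S t) : Submodule.span S t = ⊤ := by
  have key (a : A) (ha : a ∈ Algebra.adjoin S s) :
      ∀ x ∈ Submodule.span S t, a * x ∈ Submodule.span S t := by
    induction ha using Algebra.adjoin_induction with
    | mem a ha =>
      intro x hx
      induction hx using Submodule.span_induction with
      | mem v hv => exact hmul a ha v hv
      | zero => simp
      | add x y _ _ hx hy => rw [mul_add]; exact add_mem hx hy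
      | smul c x _ hx => rw [mul_smul_comm]; exact Submodule.smul_mem _ c hx
    | algebraMap c =>
      exact fun x hx => by rw [← Algebra.smul_def]; exact Submodule.smul_mem _ c hx
    | add a b _ _ ha hb => exact fun x hx => by rw [add_mul]; exact add_mem (ha x hx) (hb x hx)
    | mul a b _ _ ha hb => exact fun x hx => by rw [mul_assoc]; exact ha _ (hb x hx)
  refine eq_top_iff.2 fun a _ => ?_
  simpa using key a (hs ▸ Algebra.mem_top) 1 h1

variable {r : ℕ} {i j : Fin (r - 1)} {w : Perm (Fin r)} {l : List (Fin (r - 1))}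

def lo (i : Fin (r - 1)) : Fin r := ⟨i, by omega⟩

def hi (i : Fin (r - 1)) : Fin r := ⟨i + 1, by omega⟩

lemma val_hi (i : Fin (r - 1)) : (hi i : ℕ) = lo i + 1 := rfl

lemma lo_lt_hi (i : Fin (r - 1)) : lo i < hi i := Fin.lt_def.2 (Nat.lt_succ_self _)

lemma simpleRefl_eq_swap (i : Fin (r - 1)) : simpleRefl r i = swap (lo i) (hi i) := rfl

@[simp] lemma simpleRefl_inv (i : Fin (r - 1)) : (simpleRefl r i)⁻¹ = simpleRefl r i :=
  swap_inv _ _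

@[simp] lemma simpleRefl_apply_lo (i : Fin (r - 1)) : simpleRefl r i (lo i) = hi i :=
  swap_apply_left _ _

@[simp] lemma simpleRefl_apply_hi (i : Fin (r - 1)) : simpleRefl r i (hi i) = lo i :=
  swap_apply_right _ _

@[simp] lemma simpleRefl_mul_self (i : Fin (r - 1)) : simpleRefl r i * simpleRefl r i = 1 :=
  swap_mul_self _ _

@[simp] lemma simpleRefl_mul_simpleRefl_mul (i : Fin (r - 1)) (w : Perm (Fin r)) :
    simpleRefl r i * (simpleRefl r i * w) = w := by
  rw [← mul_assoc, simpleRefl_mul_self, one_mul]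

@[simp] lemma mul_simpleRefl_mul_simpleRefl (w : Perm (Fin r)) (j : Fin (r - 1)) :
    w * simpleRefl r j * simpleRefl r j = w := by
  rw [mul_assoc, simpleRefl_mul_self, mul_one]

lemma val_simpleRefl_apply (i : Fin (r - 1)) (x : Fin r) :
    (simpleRefl r i x : ℕ) =
      if (x : ℕ) = i then (i : ℕ) + 1 else if (x : ℕ) = i + 1 then (i : ℕ) else x := by
  simp only [simpleRefl_eq_swap, swap_apply_def, lo, hi, Fin.ext_iff]
  split_ifs <;> simp_all

lemma swap_apply_lt_swap_apply_iff {a b x y : Fin r} (hab : (b : ℕ) = a + 1) :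
    swap a b x < swap a b y ↔ (x < y ∧ ¬(x = a ∧ y = b)) ∨ (x = b ∧ y = a) := by
  simp only [swap_apply_def, Fin.lt_def, Fin.ext_iff]
  split_ifs <;> omega

/-- Equivalent to `ℓ(s_i w) < ℓ(w)`, see `isLeftDescent_iff_permLength_lt`. -/
def IsLeftDescent (i : Fin (r - 1)) (w : Perm (Fin r)) : Prop := w⁻¹ (hi i) < w⁻¹ (lo i)

def inversions (w : Perm (Fin r)) : Finset (Fin r × Fin r) :=
  Finset.univ.filter fun p => p.1 < p.2 ∧ w p.2 < w p.1

lemma permLength_eq_card_inversions (w : Perm (Fin r)) : permLength w = (inversions w).card := rfl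

lemma inversions_simpleRefl_mul (h : ¬IsLeftDescent i w) :
    inversions (simpleRefl r i * w) = insert (w⁻¹ (lo i), w⁻¹ (hi i)) (inversions w) := by
  have hne : w⁻¹ (lo i) ≠ w⁻¹ (hi i) := by simp [lo, hi, Fin.ext_iff]
  have hlt : w⁻¹ (lo i) < w⁻¹ (hi i) := lt_of_le_of_ne (not_lt.1 h) hne
  ext ⟨u, v⟩
  simp only [inversions, Finset.mem_insert, Finset.mem_filter, Finset.mem_univ, true_and,
    Perm.mul_apply, simpleRefl_eq_swap, swap_apply_lt_swap_apply_iff (val_hi i), Prod.mk.injEq,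
    Perm.eq_inv_iff_eq]
  constructor
  · rintro ⟨huv, ⟨hw, -⟩ | ⟨hv, hu⟩⟩
    · exact Or.inr ⟨huv, hw⟩
    · exact Or.inl ⟨hu, hv⟩
  · rintro (⟨hu, hv⟩ | ⟨huv, hw⟩)
    · refine ⟨by simpa [← hu, ← hv] using hlt, Or.inr ⟨hv, hu⟩⟩
    · refine ⟨huv, Or.inl ⟨hw, ?_⟩⟩
      rintro ⟨hv, hu⟩
      exact lt_asymm huv (by simpa [← hu, ← hv] using hlt)

@[simp] lemma inv_simpleRefl_mul_apply (i : Fin (r - 1)) (w : Perm (Fin r)) (x : Fin r) :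
    (simpleRefl r i * w)⁻¹ x = w⁻¹ (simpleRefl r i x) := by
  simp [mul_inv_rev]

lemma permLength_simpleRefl_mul_of_not_isLeftDescent (h : ¬IsLeftDescent i w) :
    permLength (simpleRefl r i * w) = permLength w + 1 := by
  have hnotMem : (w⁻¹ (lo i), w⁻¹ (hi i)) ∉ inversions w := by
    simp [inversions, (lo_lt_hi i).le]
  rw [permLength_eq_card_inversions, inversions_simpleRefl_mul h,
    Finset.card_insert_of_notMem hnotMem, permLength_eq_card_inversions]

lemma isLeftDescent_simpleRefl_mul_iff :
    IsLeftDescent i (simpleRefl r i * w) ↔ ¬IsLeftDescent i w := by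
  have hne : w⁻¹ (lo i) ≠ w⁻¹ (hi i) := by simp [lo, hi, Fin.ext_iff]
  rw [IsLeftDescent, IsLeftDescent, inv_simpleRefl_mul_apply, inv_simpleRefl_mul_apply,
    simpleRefl_apply_lo, simpleRefl_apply_hi, not_lt, hne.le_iff_lt]

lemma permLength_simpleRefl_mul_of_isLeftDescent (h : IsLeftDescent i w) :
    permLength (simpleRefl r i * w) + 1 = permLength w := by
  simpa using (permLength_simpleRefl_mul_of_not_isLeftDescent
    fun h' => isLeftDescent_simpleRefl_mul_iff.1 h' h).symm

lemma isLeftDescent_iff_permLength_lt :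
    IsLeftDescent i w ↔ permLength (simpleRefl r i * w) < permLength w := by
  by_cases h : IsLeftDescent i w
  · simp only [h, true_iff]
    linarith [permLength_simpleRefl_mul_of_isLeftDescent h]
  · simp only [h, false_iff, not_lt]
    linarith [permLength_simpleRefl_mul_of_not_isLeftDescent h]

lemma permLength_inv (w : Perm (Fin r)) : permLength w⁻¹ = permLength w := by
  refine Finset.card_bij' (fun p _ => (w⁻¹ p.2, w⁻¹ p.1)) (fun p _ => (w p.2, w p.1))
    ?_ ?_ (by simp) (by simp) <;>
  · rintro p hp
    simp only [Finset.mem_filter, Finset.mem_univ, true_and] at hp ⊢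
    simpa using hp.symm

lemma permLength_one : permLength (1 : Perm (Fin r)) = 0 := by
  rw [permLength_eq_card_inversions, Finset.card_eq_zero, inversions, Finset.filter_eq_empty_iff]
  exact fun _ _ h => lt_asymm h.1 h.2

lemma exists_isLeftDescent_of_ne_one (hw : w ≠ 1) : ∃ i, IsLeftDescent i w := by
  by_contra! h
  refine hw ?_
  obtain _ | n := r
  · exact Subsingleton.elim _ _
  have hmono : StrictMono ⇑w⁻¹ := Fin.strictMono_iff_lt_succ.2 fun i =>
    lt_of_le_of_ne (not_lt.1 (h i)) (by simp [Fin.ext_iff])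
  have := Subsingleton.elim (hmono.orderIsoOfSurjective _ w⁻¹.surjective) (OrderIso.refl _)
  rw [← inv_eq_one]
  ext x
  exact congrArg (fun e => (e x : ℕ)) this

def IsRightDescent (j : Fin (r - 1)) (w : Perm (Fin r)) : Prop := IsLeftDescent j w⁻¹

lemma isRightDescent_iff_permLength_lt :
    IsRightDescent j w ↔ permLength (w * simpleRefl r j) < permLength w := by
  rw [IsRightDescent, isLeftDescent_iff_permLength_lt, ← permLength_inv (w * _), mul_inv_rev,
    simpleRefl_inv, permLength_inv]

lemma isRightDescent_mul_simpleRefl_iff :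
    IsRightDescent j (w * simpleRefl r j) ↔ ¬IsRightDescent j w := by
  rw [IsRightDescent, IsRightDescent, mul_inv_rev, simpleRefl_inv, isLeftDescent_simpleRefl_mul_iff]

lemma simpleRefl_mul_eq_mul_simpleRefl_iff :
    simpleRefl r i * w = w * simpleRefl r j ↔ swap (w (lo j)) (w (hi j)) = simpleRefl r i := by
  rw [simpleRefl_eq_swap j, mul_swap_eq_swap_mul, mul_left_inj, eq_comm]

lemma isLeftDescent_mul_simpleRefl_iff (h : simpleRefl r i * w ≠ w * simpleRefl r j) :
    IsLeftDescent i (w * simpleRefl r j) ↔ IsLeftDescent i w := by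
  rw [Ne, simpleRefl_mul_eq_mul_simpleRefl_iff] at h
  have h₁ : ¬(w⁻¹ (hi i) = lo j ∧ w⁻¹ (lo i) = hi j) := by
    rintro ⟨h₁, h₂⟩
    rw [Perm.inv_eq_iff_eq] at h₁ h₂
    exact h (by rw [← h₁, ← h₂, swap_comm]; rfl)
  have h₂ : ¬(w⁻¹ (hi i) = hi j ∧ w⁻¹ (lo i) = lo j) := by
    rintro ⟨h₁, h₂⟩
    rw [Perm.inv_eq_iff_eq] at h₁ h₂
    exact h (by rw [← h₁, ← h₂]; rfl)
  rw [IsLeftDescent, IsLeftDescent, mul_inv_rev, simpleRefl_inv, Perm.mul_apply, Perm.mul_apply,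
    simpleRefl_eq_swap j, swap_apply_lt_swap_apply_iff (val_hi j)]
  tauto

lemma isRightDescent_simpleRefl_mul_iff (h : simpleRefl r i * w ≠ w * simpleRefl r j) :
    IsRightDescent j (simpleRefl r i * w) ↔ IsRightDescent j w := by
  rw [IsRightDescent, IsRightDescent, mul_inv_rev, simpleRefl_inv]
  refine isLeftDescent_mul_simpleRefl_iff fun h' => h ?_
  simpa using congrArg (·⁻¹) h'.symm

lemma isLeftDescent_iff_isRightDescent (h : simpleRefl r i * w = w * simpleRefl r j) :
    IsLeftDescent i w ↔ IsRightDescent j w := by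
  rw [isLeftDescent_iff_permLength_lt, isRightDescent_iff_permLength_lt, h]

def wordPerm (l : List (Fin (r - 1))) : Perm (Fin r) := (l.map (simpleRefl r)).prod

@[simp] lemma wordPerm_nil : wordPerm ([] : List (Fin (r - 1))) = 1 := rfl

@[simp] lemma wordPerm_cons (i : Fin (r - 1)) (l : List (Fin (r - 1))) :
    wordPerm (i :: l) = simpleRefl r i * wordPerm l := rfl

def IsReduced (l : List (Fin (r - 1))) : Prop := permLength (wordPerm l) = l.length

lemma permLength_wordPerm_le (l : List (Fin (r - 1))) : permLength (wordPerm l) ≤ l.length := by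
  induction l with
  | nil => simp [permLength_one]
  | cons i l ih =>
    by_cases h : IsLeftDescent i (wordPerm l)
    · have := permLength_simpleRefl_mul_of_isLeftDescent h
      simp only [wordPerm_cons, List.length_cons]
      omega
    · simp [permLength_simpleRefl_mul_of_not_isLeftDescent h, ih]

lemma isReduced_cons_iff : IsReduced (i :: l) ↔ IsReduced l ∧ ¬IsLeftDescent i (wordPerm l) := by
  have := permLength_wordPerm_le l
  by_cases h : IsLeftDescent i (wordPerm l)
  · have := permLength_simpleRefl_mul_of_isLeftDescent h
    simp only [IsReduced, wordPerm_cons, List.length_cons, h, not_true, and_false, iff_false]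
    omega
  · simp [IsReduced, permLength_simpleRefl_mul_of_not_isLeftDescent h, h]

lemma IsReduced.isLeftDescent (h : IsReduced (i :: l)) : IsLeftDescent i (wordPerm (i :: l)) := by
  rw [wordPerm_cons, isLeftDescent_simpleRefl_mul_iff]
  exact (isReduced_cons_iff.1 h).2

lemma isReduced_cons_of_isLeftDescent (h : IsLeftDescent i w) (hl : IsReduced l)
    (hlw : wordPerm l = simpleRefl r i * w) : IsReduced (i :: l) ∧ wordPerm (i :: l) = w := by
  refine ⟨isReduced_cons_iff.2 ⟨hl, ?_⟩, by simp [hlw]⟩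
  rwa [hlw, isLeftDescent_simpleRefl_mul_iff, not_not]

lemma exists_isReduced (w : Perm (Fin r)) : ∃ l, IsReduced l ∧ wordPerm l = w := by
  by_cases hw : w = 1
  · exact ⟨[], by simp [IsReduced, permLength_one], hw.symm⟩
  obtain ⟨i, hi⟩ := exists_isLeftDescent_of_ne_one hw
  obtain ⟨l, hl, hlw⟩ := exists_isReduced (simpleRefl r i * w)
  exact ⟨i :: l, isReduced_cons_of_isLeftDescent hi hl hlw⟩
termination_by permLength w
decreasing_by exact isLeftDescent_iff_permLength_lt.1 hi

lemma exists_isReduced_cons (h : IsLeftDescent i w) :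
    ∃ l, IsReduced (i :: l) ∧ wordPerm (i :: l) = w :=
  let ⟨l, hl, hlw⟩ := exists_isReduced (simpleRefl r i * w)
  ⟨l, isReduced_cons_of_isLeftDescent h hl hlw⟩

lemma simpleRefl_mul_comm (h : (i : ℕ) + 1 < j) :
    simpleRefl r i * simpleRefl r j = simpleRefl r j * simpleRefl r i := by
  refine Equiv.ext fun x => Fin.ext ?_
  simp only [Perm.mul_apply, val_simpleRefl_apply]
  split_ifs <;> omega

lemma simpleRefl_braid (h : (j : ℕ) = i + 1) :
    simpleRefl r i * simpleRefl r j * simpleRefl r i =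
      simpleRefl r j * simpleRefl r i * simpleRefl r j := by
  have hlo : lo j = hi i := Fin.ext h
  have e₁ := swap_mul_swap_mul_swap (x := hi j) (y := hi i) (z := lo i)
    (by simp [Fin.ext_iff, hi, h]) (by simp [Fin.ext_iff, hi, lo]; omega)
  have e₂ := swap_mul_swap_mul_swap (x := lo i) (y := hi i) (z := hi j)
    (by simp [Fin.ext_iff, hi, lo]) (by simp [Fin.ext_iff, hi, lo]; omega)
  rw [swap_comm (hi i) (lo i), swap_comm (hi j) (hi i)] at e₁
  rw [simpleRefl_eq_swap, simpleRefl_eq_swap, hlo, e₁, e₂, swap_comm]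

lemma isReduced_nil : IsReduced ([] : List (Fin (r - 1))) := by
  simp [IsReduced, permLength_one]

lemma isReduced_pair (h : i ≠ j) : IsReduced [i, j] := by
  have := Fin.val_ne_of_ne h
  simp only [isReduced_cons_iff, isReduced_nil, IsLeftDescent, wordPerm_cons, wordPerm_nil,
    mul_one, simpleRefl_inv, inv_one, Perm.one_apply, Fin.lt_def, val_simpleRefl_apply, lo, hi,
    true_and]
  split_ifs <;> omega

lemma isReduced_triple (h : (j : ℕ) = i + 1 ∨ (i : ℕ) = j + 1) : IsReduced [i, j, i] := by
  simp only [isReduced_cons_iff, isReduced_nil, IsLeftDescent, wordPerm_cons, wordPerm_nil,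
    mul_one, mul_inv_rev, simpleRefl_inv, inv_one, Perm.one_apply, Perm.mul_apply, Fin.lt_def,
    val_simpleRefl_apply, lo, hi, true_and]
  split_ifs <;> omega

lemma simpleRefl_apply_of_ne {x : Fin r} (h₀ : (x : ℕ) ≠ i) (h₁ : (x : ℕ) ≠ i + 1) :
    simpleRefl r i x = x :=
  Fin.ext (by rw [val_simpleRefl_apply, if_neg h₀, if_neg h₁])

lemma isLeftDescent_simpleRefl_mul_iff_of_far (h : (i : ℕ) + 1 < j ∨ (j : ℕ) + 1 < i) :
    IsLeftDescent j (simpleRefl r i * w) ↔ IsLeftDescent j w := by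
  rw [IsLeftDescent, IsLeftDescent, inv_simpleRefl_mul_apply, inv_simpleRefl_mul_apply,
    simpleRefl_apply_of_ne (x := lo j) (by simp [lo]; omega) (by simp [lo]; omega),
    simpleRefl_apply_of_ne (x := hi j) (by simp [hi]; omega) (by simp [hi]; omega)]

lemma isLeftDescent_of_adjacent (h : (j : ℕ) = i + 1)
    (hdi : IsLeftDescent i w) (hdj : IsLeftDescent j w) :
    IsLeftDescent j (simpleRefl r i * w) ∧
      IsLeftDescent i (simpleRefl r j * (simpleRefl r i * w)) := by
  have hlo : lo j = hi i := Fin.ext h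
  have hfix₁ : simpleRefl r i (hi j) = hi j :=
    simpleRefl_apply_of_ne (by simp [hi]; omega) (by simp [hi]; omega)
  have hfix₂ : simpleRefl r j (lo i) = lo i :=
    simpleRefl_apply_of_ne (by simp [lo]; omega) (by simp [lo]; omega)
  simp only [IsLeftDescent, inv_simpleRefl_mul_apply, hfix₁, hfix₂] at hdi hdj ⊢
  rw [← hlo, simpleRefl_apply_lo, hfix₁, simpleRefl_apply_lo, hlo, simpleRefl_apply_hi]
  rw [hlo] at hdj
  exact ⟨hdj.trans hdi, hdj⟩

lemma IsReduced.of_wordPerm_eq {l l' : List (Fin (r - 1))} (hl : IsReduced l)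
    (hperm : wordPerm l' = wordPerm l) (hlen : l'.length = l.length) : IsReduced l' := by
  rw [IsReduced, hperm, hlen]
  exact hl

lemma exists_isReduced_of_far (h : (i : ℕ) + 1 < j)
    (hdi : IsLeftDescent i w) (hdj : IsLeftDescent j w) :
    ∃ γ, IsReduced (i :: j :: γ) ∧ wordPerm (i :: j :: γ) = w ∧
      IsReduced (j :: i :: γ) ∧ wordPerm (j :: i :: γ) = w := by
  obtain ⟨γ, hγ, hγw⟩ :=
    exists_isReduced_cons ((isLeftDescent_simpleRefl_mul_iff_of_far (Or.inl h)).2 hdj)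
  obtain ⟨hred, hw⟩ := isReduced_cons_of_isLeftDescent hdi hγ hγw
  have hw' : wordPerm (j :: i :: γ) = w := by
    rw [← hw, wordPerm_cons, wordPerm_cons, ← mul_assoc, ← simpleRefl_mul_comm h]; rfl
  exact ⟨γ, hred, hw, hred.of_wordPerm_eq (hw'.trans hw.symm) rfl, hw'⟩

lemma exists_isReduced_of_adjacent (h : (j : ℕ) = i + 1)
    (hdi : IsLeftDescent i w) (hdj : IsLeftDescent j w) :
    ∃ γ, IsReduced (i :: j :: i :: γ) ∧ wordPerm (i :: j :: i :: γ) = w ∧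
      IsReduced (j :: i :: j :: γ) ∧ wordPerm (j :: i :: j :: γ) = w := by
  obtain ⟨hdj', hdi'⟩ := isLeftDescent_of_adjacent h hdi hdj
  obtain ⟨γ, hγ, hγw⟩ := exists_isReduced_cons hdi'
  obtain ⟨hγ, hγw⟩ := isReduced_cons_of_isLeftDescent hdj' hγ hγw
  obtain ⟨hred, hw⟩ := isReduced_cons_of_isLeftDescent hdi hγ hγw
  have hw' : wordPerm (j :: i :: j :: γ) = w := by
    rw [← hw]
    simp only [wordPerm_cons, ← mul_assoc, simpleRefl_braid h]
  exact ⟨γ, hred, hw, hred.of_wordPerm_eq (hw'.trans hw.symm) rfl, hw'⟩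

section Matsumoto

variable {M : Type*} [Monoid M] {t : Fin (r - 1) → M}

lemma exists_isReduced_cons_prod_eq
    (hcomm : ∀ i j : Fin (r - 1), (i : ℕ) + 1 < j → t i * t j = t j * t i)
    (hbraid : ∀ i j : Fin (r - 1), (j : ℕ) = i + 1 → t i * t j * t i = t j * t i * t j)
    (hij : i ≠ j) (hdi : IsLeftDescent i w) (hdj : IsLeftDescent j w) :
    ∃ α β, IsReduced (i :: α) ∧ wordPerm (i :: α) = w ∧ IsReduced (j :: β) ∧
      wordPerm (j :: β) = w ∧ ((i :: α).map t).prod = ((j :: β).map t).prod := by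
  wlog hlt : i < j generalizing i j
  · obtain ⟨β, α, h₁, h₂, h₃, h₄, h₅⟩ :=
      this hij.symm hdj hdi (lt_of_le_of_ne (not_lt.1 hlt) hij.symm)
    exact ⟨α, β, h₃, h₄, h₁, h₂, h₅.symm⟩
  rcases (Nat.succ_le_of_lt (Fin.lt_def.1 hlt)).eq_or_lt with hadj | hfar
  · obtain ⟨γ, h₁, h₂, h₃, h₄⟩ := exists_isReduced_of_adjacent hadj.symm hdi hdj
    refine ⟨_, _, h₁, h₂, h₃, h₄, ?_⟩
    simp only [List.map_cons, List.prod_cons, ← mul_assoc, hbraid i j hadj.symm]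
  · obtain ⟨γ, h₁, h₂, h₃, h₄⟩ := exists_isReduced_of_far hfar hdi hdj
    refine ⟨_, _, h₁, h₂, h₃, h₄, ?_⟩
    simp only [List.map_cons, List.prod_cons, ← mul_assoc, hcomm i j hfar]

/-- A form of Matsumoto's theorem. -/
theorem prod_map_eq_of_isReduced
    (hcomm : ∀ i j : Fin (r - 1), (i : ℕ) + 1 < j → t i * t j = t j * t i)
    (hbraid : ∀ i j : Fin (r - 1), (j : ℕ) = i + 1 → t i * t j * t i = t j * t i * t j)
    {l₁ l₂ : List (Fin (r - 1))} (h₁ : IsReduced l₁) (h₂ : IsReduced l₂)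
    (h : wordPerm l₁ = wordPerm l₂) : (l₁.map t).prod = (l₂.map t).prod := by
  induction hn : l₁.length using Nat.strong_induction_on generalizing l₁ l₂ with
  | _ n ih =>
  have cancel : ∀ {k : Fin (r - 1)} {γ δ : List (Fin (r - 1))}, IsReduced (k :: γ) →
      IsReduced (k :: δ) → wordPerm (k :: γ) = wordPerm (k :: δ) → γ.length < n →
      ((k :: γ).map t).prod = ((k :: δ).map t).prod := fun hγ hδ hγδ hlt => by
    simp only [List.map_cons, List.prod_cons]
    rw [ih _ hlt (isReduced_cons_iff.1 hγ).1 (isReduced_cons_iff.1 hδ).1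
      (mul_left_cancel hγδ) rfl]
  rcases l₁ with _ | ⟨i, α⟩ <;> rcases l₂ with _ | ⟨j, β⟩
  · rfl
  · rw [IsReduced, ← h] at h₂
    simp [permLength_one] at h₂
  · rw [IsReduced, h] at h₁
    simp [permLength_one] at h₁
  by_cases hij : i = j
  · subst hij
    exact cancel h₁ h₂ h (by simp [← hn])
  obtain ⟨α', β', h₁', hα', h₂', hβ', hprod⟩ :=
    exists_isReduced_cons_prod_eq hcomm hbraid hij h₁.isLeftDescent (h ▸ h₂.isLeftDescent)
  have hβ'len : (j :: β').length = (i :: α).length := by rw [← h₂', hβ', h₁]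
  calc ((i :: α).map t).prod = ((i :: α').map t).prod :=
        cancel h₁ h₁' hα'.symm (by simp [← hn])
    _ = ((j :: β').map t).prod := hprod
    _ = ((j :: β).map t).prod :=
        cancel h₂' h₂ (hβ'.trans h) (by simp only [List.length_cons] at hβ'len hn; omega)

end Matsumoto

section RegularRepresentation

variable {R : Type} [CommRing R] (q : R)

noncomputable def leftOp (i : Fin (r - 1)) : Module.End R (Perm (Fin r) →₀ R) :=
  heckeOp q (simpleRefl r i * ·) (IsLeftDescent i)

noncomputable def rightOp (j : Fin (r - 1)) : Module.End R (Perm (Fin r) →₀ R) :=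
  heckeOp q (· * simpleRefl r j) (IsRightDescent j)

lemma leftOp_quadratic (i : Fin (r - 1)) : (leftOp q i - algebraMap R _ q) * (leftOp q i + 1) = 0 :=
  heckeOp_quadratic (simpleRefl_mul_simpleRefl_mul i) fun _ => isLeftDescent_simpleRefl_mul_iff

lemma commute_leftOp_rightOp (i j : Fin (r - 1)) : Commute (leftOp (r := r) q i) (rightOp q j) :=
  heckeOp_commute (simpleRefl_mul_simpleRefl_mul i) (fun w => mul_simpleRefl_mul_simpleRefl w j)
    (fun _ => (mul_assoc _ _ _).symm) (fun _ => isLeftDescent_simpleRefl_mul_iff)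
    (fun _ => isRightDescent_mul_simpleRefl_iff) (fun _ => isLeftDescent_mul_simpleRefl_iff)
    (fun _ => isRightDescent_simpleRefl_mul_iff) (fun _ => isLeftDescent_iff_isRightDescent)

lemma prod_leftOp_single_one (hl : IsReduced l) :
    (l.map (leftOp q)).prod (Finsupp.single 1 1) = Finsupp.single (wordPerm l) 1 := by
  induction l with
  | nil => rfl
  | cons i l ih =>
    obtain ⟨hl, hi⟩ := isReduced_cons_iff.1 hl
    rw [List.map_cons, List.prod_cons, Module.End.mul_apply, ih hl, leftOp,
      heckeOp_single_of_neg hi, wordPerm_cons]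

lemma apply_single_eq_zero_of_commute_rightOp {f : Module.End R (Perm (Fin r) →₀ R)}
    (hf : ∀ j, Commute f (rightOp q j)) (h₁ : f (Finsupp.single 1 1) = 0) (w : Perm (Fin r)) :
    f (Finsupp.single w 1) = 0 := by
  by_cases hw : w = 1
  · rwa [hw]
  obtain ⟨j, hj⟩ := exists_isLeftDescent_of_ne_one (inv_ne_one.2 hw)
  have hsingle : Finsupp.single w 1 = rightOp q j (Finsupp.single (w * simpleRefl r j) 1) := by
    rw [rightOp, heckeOp_single_of_neg (isRightDescent_mul_simpleRefl_iff.not_left.2 hj),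
      mul_simpleRefl_mul_simpleRefl]
  rw [hsingle, ← Module.End.mul_apply, (hf j).eq, Module.End.mul_apply,
    apply_single_eq_zero_of_commute_rightOp hf h₁ (w * simpleRefl r j), map_zero]
termination_by permLength w
decreasing_by exact isRightDescent_iff_permLength_lt.1 hj

lemma prod_leftOp_eq_of_isReduced {l₁ l₂ : List (Fin (r - 1))} (h₁ : IsReduced l₁)
    (h₂ : IsReduced l₂) (h : wordPerm l₁ = wordPerm l₂) :
    (l₁.map (leftOp (R := R) q)).prod = (l₂.map (leftOp q)).prod := by
  have hcomm (l : List (Fin (r - 1))) (j : Fin (r - 1)) :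
      Commute (l.map (leftOp q)).prod (rightOp q j) :=
    Commute.list_prod_left _ _ (by simp [commute_leftOp_rightOp])
  rw [← sub_eq_zero]
  refine Finsupp.basisSingleOne.ext fun w => ?_
  exact apply_single_eq_zero_of_commute_rightOp q
    (fun j => Commute.sub_left (R := Module.End R (Perm (Fin r) →₀ R))
      (hcomm l₁ j) (hcomm l₂ j))
    (by simp [prod_leftOp_single_one q h₁, prod_leftOp_single_one q h₂, h]) w

end RegularRepresentation

section HeckeAlgebra

variable {R : Type} [CommRing R] {q : R}

lemma leftOp_rel ⦃x y : FreeAlgebra R (Fin (r - 1))⦄ (h : HeckeRel R q (r - 1) x y) :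
    FreeAlgebra.lift R (leftOp q) x = FreeAlgebra.lift R (leftOp q) y := by
  cases h with
  | quad i => simpa using leftOp_quadratic q i
  | comm i j h =>
    simpa using prod_leftOp_eq_of_isReduced q (isReduced_pair (by omega : i ≠ j))
      (isReduced_pair (by omega : j ≠ i)) (by simpa using simpleRefl_mul_comm h)
  | braid i j h =>
    simpa [mul_assoc] using prod_leftOp_eq_of_isReduced q (isReduced_triple (Or.inl h))
      (isReduced_triple (Or.inr h)) (by simpa [mul_assoc] using simpleRefl_braid h)

noncomputable def regularRep (R : Type) [CommRing R] (q : R) (r : ℕ) :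
    Hecke R q r →ₐ[R] Module.End R (Perm (Fin r) →₀ R) :=
  RingQuot.liftAlgHom R ⟨FreeAlgebra.lift R (leftOp q), leftOp_rel⟩

lemma regularRep_prod_Tgen (l : List (Fin (r - 1))) :
    regularRep R q r (l.map (Tgen R q r)).prod = (l.map (leftOp q)).prod := by
  rw [map_list_prod, List.map_map]
  congr 1
  refine List.map_congr_left fun i _ => ?_
  simp [regularRep, Tgen]

lemma Tgen_mul_comm (h : (i : ℕ) + 1 < j) :
    Tgen R q r i * Tgen R q r j = Tgen R q r j * Tgen R q r i := by
  simp only [Tgen, ← map_mul]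
  exact RingQuot.mkAlgHom_rel R (HeckeRel.comm i j h)

lemma Tgen_braid (h : (j : ℕ) = i + 1) :
    Tgen R q r i * Tgen R q r j * Tgen R q r i = Tgen R q r j * Tgen R q r i * Tgen R q r j := by
  simp only [Tgen, ← map_mul]
  exact RingQuot.mkAlgHom_rel R (HeckeRel.braid i j h)

lemma Tgen_mul_self (i : Fin (r - 1)) :
    Tgen R q r i * Tgen R q r i = (q - 1) • Tgen R q r i + algebraMap R _ q := by
  have h := RingQuot.mkAlgHom_rel R (HeckeRel.quad (q := q) i)
  rw [map_mul, map_sub, map_add, map_one, map_zero, AlgHom.commutes] at h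
  change (Tgen R q r i - algebraMap R _ q) * (Tgen R q r i + 1) = 0 at h
  rw [sub_mul, mul_add, mul_add, mul_one, mul_one] at h
  rw [Algebra.smul_def, map_sub, map_one, sub_mul, one_mul]
  linear_combination (norm := abel) h

lemma adjoin_range_Tgen : Algebra.adjoin R (Set.range (Tgen R q r)) = ⊤ := by
  rw [show Tgen R q r = RingQuot.mkAlgHom R _ ∘ FreeAlgebra.ι R from rfl, Set.range_comp,
    ← AlgHom.map_adjoin, FreeAlgebra.adjoin_range_ι, Algebra.map_top,
    AlgHom.range_eq_top]
  exact RingQuot.mkAlgHom_surjective R _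

variable (q) in
noncomputable def T (w : Perm (Fin r)) : Hecke R q r :=
  ((exists_isReduced w).choose.map (Tgen R q r)).prod

lemma isTFamily_T : IsTFamily R q r (T q) := fun w l hw hl => by
  obtain ⟨hred, hperm⟩ := (exists_isReduced w).choose_spec
  exact prod_map_eq_of_isReduced (fun _ _ => Tgen_mul_comm) (fun _ _ => Tgen_braid) hred
    (by rw [IsReduced, wordPerm, ← hw, hl]) (hperm.trans hw)

lemma T_wordPerm (hl : IsReduced l) : T q (wordPerm l) = (l.map (Tgen R q r)).prod :=
  isTFamily_T _ l rfl hl.symm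

lemma T_one : T q (1 : Perm (Fin r)) = 1 :=
  T_wordPerm isReduced_nil

lemma Tgen_mul_T_of_not_isLeftDescent (h : ¬IsLeftDescent i w) :
    Tgen R q r i * T q w = T q (simpleRefl r i * w) := by
  obtain ⟨l, hl, rfl⟩ := exists_isReduced w
  rw [T_wordPerm hl, ← wordPerm_cons, T_wordPerm (isReduced_cons_iff.2 ⟨hl, h⟩),
    List.map_cons, List.prod_cons]

lemma Tgen_mul_T_of_isLeftDescent (h : IsLeftDescent i w) :
    Tgen R q r i * T q w = (q - 1) • T q w + q • T q (simpleRefl r i * w) := by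
  have hw : T q w = Tgen R q r i * T q (simpleRefl r i * w) := by
    rw [Tgen_mul_T_of_not_isLeftDescent fun h' => isLeftDescent_simpleRefl_mul_iff.1 h' h,
      simpleRefl_mul_simpleRefl_mul]
  rw [hw, ← mul_assoc, Tgen_mul_self, add_mul, smul_mul_assoc, ← Algebra.smul_def]

lemma span_T_eq_top : Submodule.span R (Set.range (T (r := r) q)) = ⊤ := by
  refine span_eq_top_of_mul_mem adjoin_range_Tgen
    (T_one (q := q) ▸ Submodule.subset_span ⟨1, rfl⟩) ?_
  rintro _ ⟨i, rfl⟩ _ ⟨w, rfl⟩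
  by_cases h : IsLeftDescent i w
  · rw [Tgen_mul_T_of_isLeftDescent h]
    exact add_mem (Submodule.smul_mem _ _ (Submodule.subset_span ⟨w, rfl⟩))
      (Submodule.smul_mem _ _ (Submodule.subset_span ⟨_, rfl⟩))
  · rw [Tgen_mul_T_of_not_isLeftDescent h]
    exact Submodule.subset_span ⟨_, rfl⟩

lemma regularRep_T (w : Perm (Fin r)) :
    regularRep R q r (T q w) (Finsupp.single 1 1) = Finsupp.single w 1 := by
  obtain ⟨l, hl, rfl⟩ := exists_isReduced w
  rw [T_wordPerm hl, regularRep_prod_Tgen, prod_leftOp_single_one q hl]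

lemma linearIndependent_T : LinearIndependent R (T (r := r) q) := by
  refine LinearIndependent.of_comp
    ((LinearMap.applyₗ (Finsupp.single 1 1)).comp (regularRep R q r).toLinearMap) ?_
  convert (Finsupp.basisSingleOne (R := R) (ι := Perm (Fin r))).linearIndependent
  ext1 w
  simp [regularRep_T]

end HeckeAlgebra

end IwahoriHecke

theorem hecke_free_basis_general (R : Type) [CommRing R] (q : R) (r : ℕ) :
    ∃ T : Equiv.Perm (Fin r) → Hecke R q r,
      IsTFamily R q r T ∧
      ∃ B : Module.Basis (Equiv.Perm (Fin r)) R (Hecke R q r), ∀ w, B w = T w :=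
  ⟨IwahoriHecke.T q, IwahoriHecke.isTFamily_T,
    Module.Basis.mk IwahoriHecke.linearIndependent_T IwahoriHecke.span_T_eq_top.ge,
    fun _ => Module.Basis.mk_apply _ _ _⟩

/-- The Iwahori–Hecke algebra `ℋ_r` over a commutative domain `R` with
invertible parameter `q` is a free `R`-module with basis `{T_w : w ∈ 𝔖_r}`, where
`T_w = T_{i_1} ⋯ T_{i_s}` for any reduced expression `w = s_{i_1} ⋯ s_{i_s}`. -/
theorem hecke_free_basis (R : Type) [CommRing R] [IsDomain R] (q : R) (hq : IsUnit q)
    (r : ℕ) :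
    ∃ T : Equiv.Perm (Fin r) → Hecke R q r,
      IsTFamily R q r T ∧
      ∃ B : Module.Basis (Equiv.Perm (Fin r)) R (Hecke R q r), ∀ w, B w = T w :=
  hecke_free_basis_general R q r
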